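/- arXiv:1305.4905 — 2 statements merged into one kernel-verified Lean document; each statement's English description precedes it below -/
import Mathlib

section
/- Fix a prime power q. Suppose that every finite simple graph containing no K_{q+2} minor has chromatic number at most q + 1 (the Hadwiger Conjecture for q + 2). Then every 2-minimal acyclic multicast network whose underlying topology is K_{q+2}-minor-free admits a rate-2 linear coding solution over the finite field F_q. -/
namespace NCMinor

variable {V A : Type}

/-- `IsArcWalk tl hd u v p` : the list of arcs `p` forms a directed walk from `u` to `v`
in the multigraph with tail map `tl` and head map `hd`. -/
def IsArcWalk (tl hd : A → V) : V → V → List A → Prop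
  | u, v, [] => u = v
  | u, v, a :: p => tl a = u ∧ IsArcWalk tl hd (hd a) v p

/-- `lam tl hd s v` : the maximum number of pairwise arc-disjoint directed paths
from `s` to `v`. -/
noncomputable def lam (tl hd : A → V) (s v : V) : ℕ :=
  sSup {k | ∃ P : Fin k → List A,
    (∀ i, IsArcWalk tl hd s v (P i)) ∧
    ∀ i j : Fin k, i ≠ j → ∀ a, a ∈ P i → a ∉ P j}

/-- in-degree -/
noncomputable def inDeg (hd : A → V) (v : V) : ℕ := {a | hd a = v}.ncard

/-- `cutVal tl hd U` : number of arcs entering the node set `U` from outside. -/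
noncomputable def cutVal (tl hd : A → V) (U : Set V) : ℕ :=
  {a | tl a ∉ U ∧ hd a ∈ U}.ncard

/-- `eta tl hd s u v` : minimum value of a cut separating `{u, v}` from `s`. -/
noncomputable def eta (tl hd : A → V) (s u v : V) : ℕ :=
  sInf {k | ∃ U : Set V, u ∈ U ∧ v ∈ U ∧ s ∉ U ∧ cutVal tl hd U = k}

def Acyclic (tl hd : A → V) : Prop := ∀ v p, IsArcWalk tl hd v v p → p = []

/-- deleting any arc decreases the max-flow to some node. -/
def LinkMinimal (tl hd : A → V) (s : V) : Prop :=
  ∀ a : A, ∃ v : V,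
    lam (fun b : {b : A // b ≠ a} => tl b.1) (fun b => hd b.1) s v < lam tl hd s v

/-- rate 2 is feasible to every receiver, but infeasible after deleting any arc. -/
def TwoMinimal (tl hd : A → V) (s : V) (T : Set V) : Prop :=
  (∀ t ∈ T, 2 ≤ lam tl hd s t) ∧
  ∀ a : A, ∃ t ∈ T,
    lam (fun b : {b : A // b ≠ a} => tl b.1) (fun b => hd b.1) s t < 2

/-- a rate-2 linear coding solution over the field `F`. -/
def IsCodingSolution (tl hd : A → V) (s : V) (T : Set V) {F : Type} [Field F]
    (φ : A → F × F) : Prop :=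
  (∀ a, φ a ≠ 0) ∧
  (∀ a, tl a ≠ s → φ a ∈ Submodule.span F (φ '' {b | hd b = tl a})) ∧
  (∀ t ∈ T, Submodule.span F (φ '' {b | hd b = t}) = ⊤)

/-- generating relation of the subtree decomposition: consecutive arcs through an
in-degree-1 node lie in the same class. -/
def SubtreeRel (tl hd : A → V) (a b : A) : Prop :=
  hd a = tl b ∧ inDeg hd (hd a) = 1

/-- the subtrees: classes of arcs generated by `SubtreeRel`. -/
def Subtrees (tl hd : A → V) : Type := Quot (SubtreeRel tl hd)

/-- the subtree graph: two subtrees are adjacent iff some node of in-degree 2 has one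
incoming arc in each. -/
def subtreeGraph (tl hd : A → V) : SimpleGraph (Subtrees tl hd) where
  Adj x y := x ≠ y ∧ ∃ a b : A,
    Quot.mk _ a = x ∧ Quot.mk _ b = y ∧ hd a = hd b ∧ inDeg hd (hd a) = 2
  symm := by
    constructor
    rintro x y ⟨hxy, a, b, ha, hb, hab, hdeg⟩
    exact ⟨hxy.symm, b, a, hb, ha, hab.symm, hab ▸ hdeg⟩
  loopless := by constructor; rintro x ⟨hxx, -⟩; exact hxx rfl

/-- the underlying (undirected, simple) topology of the network. -/
def topology (tl hd : A → V) : SimpleGraph V where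
  Adj u v := u ≠ v ∧ ∃ a, (tl a = u ∧ hd a = v) ∨ (tl a = v ∧ hd a = u)
  symm := by constructor; rintro u v ⟨huv, a, h⟩; exact ⟨huv.symm, a, h.symm⟩
  loopless := by constructor; rintro u ⟨h, -⟩; exact h rfl

/-- graph minor via branch sets. -/
def IsMinor {W : Type} (M : SimpleGraph W) (G : SimpleGraph V) : Prop :=
  ∃ B : W → Set V,
    (∀ m, (G.induce (B m)).Connected) ∧
    (Pairwise fun m m' => Disjoint (B m) (B m')) ∧
    ∀ m m', M.Adj m m' → ∃ u ∈ B m, ∃ v ∈ B m', G.Adj u v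

/-- `S` is the arc set of an `s`-rooted out-tree. -/
def IsOutTree (tl hd : A → V) (s : V) (S : Set A) : Prop :=
  (∀ a ∈ S, hd a ≠ s) ∧
  Set.InjOn hd S ∧
  ∀ a ∈ S, ∃ p : List A, (∀ b ∈ p, b ∈ S) ∧ IsArcWalk tl hd s (tl a) p

/-- node `v` belongs to the out-tree with root `s` and arc set `S`. -/
def MemTree (tl hd : A → V) (s : V) (S : Set A) (v : V) : Prop :=
  v = s ∨ ∃ a ∈ S, hd a = v ∨ tl a = v

/-- tree decomposition of the graph `G` with host tree `H` and bags `B`. -/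
structure IsTreeDecomp (G : SimpleGraph V) {X : Type} (H : SimpleGraph X)
    (B : X → Set V) : Prop where
  isTree : H.IsTree
  mem_bag : ∀ v, ∃ x, v ∈ B x
  edge_bag : ∀ u v, G.Adj u v → ∃ x, u ∈ B x ∧ v ∈ B x
  bag_connected : ∀ v : V, (H.induce {x | v ∈ B x}).Connected

/-- size of a largest clique. -/
noncomputable def cliqueNumber {W : Type} (G : SimpleGraph W) : ℕ :=
  sSup {n | ∃ t : Finset W, G.IsNClique n t}

end NCMinor

/-!
Cut the arcs into subtrees, the classes of `SubtreeRel`: an arc entering a node of in-degree one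
is glued to the arcs leaving that node. If all arcs of a subtree carry the same vector, the coding
condition holds at nodes of in-degree one, and at every other node (receivers included) it holds as
soon as two incoming arcs carry independent vectors. In a 2-minimal network two arcs into one node
never lie in the same subtree, so it suffices to colour the subtrees properly by the `q + 1` points
of the projective line over `F`, where the subtree of the chosen arc into a node is adjacent to the
subtrees of the other arcs into it (`codingGraph`).

Contracting, for every subtree, the out-tree of nodes whose chosen incoming arc it contains shows
that this graph, restricted to subtrees owning some node, is a minor of the topology; so it has no
`K_{q+2}` minor and the Hadwiger hypothesis colours it. Each remaining subtree is a single arc with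
a single neighbour, and takes any other colour.
-/

namespace NCMinor

section Minors

variable {U W V : Type}

theorem induce_connected_of_wellFounded_descent {G : SimpleGraph V} {S : Set V} {r : V}
    (hr : r ∈ S) {R : V → V → Prop} (hR : WellFounded R)
    (hdesc : ∀ v ∈ S, v ≠ r → ∃ u ∈ S, R u v ∧ G.Adj v u) :
    (G.induce S).Connected := by
  rw [SimpleGraph.connected_iff_exists_forall_reachable]
  refine ⟨⟨r, hr⟩, fun ⟨v, hv⟩ => ?_⟩
  induction v using hR.induction with
  | _ v ih =>
    by_cases hvr : v = r
    · subst hvr; rfl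
    obtain ⟨u, hu, hRuv, hvu⟩ := hdesc v hv hvr
    exact (ih u hRuv hu).trans
      (show (G.induce S).Adj ⟨u, hu⟩ ⟨v, hv⟩ from hvu.symm).reachable

theorem induce_biUnion_connected {G : SimpleGraph V} {H : SimpleGraph W} {S : Set W}
    {β : W → Set V} (hS : (H.induce S).Connected) (hβ : ∀ w, (G.induce (β w)).Connected)
    (hadj : ∀ w w', H.Adj w w' → ∃ u ∈ β w, ∃ v ∈ β w', G.Adj u v) :
    (G.induce (⋃ w ∈ S, β w)).Connected := by
  obtain ⟨⟨w₀, hw₀⟩⟩ := hS.nonempty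
  obtain ⟨⟨u₀, hu₀⟩⟩ := (hβ w₀).nonempty
  have patch : ∀ w : S, ∃ s ⊆ ⋃ w ∈ S, β w,
      β w₀ ⊆ s ∧ β w ⊆ s ∧ (G.induce s).Connected := by
    intro w
    induction (SimpleGraph.reachable_iff_reflTransGen _ _).1
      (hS.preconnected ⟨w₀, hw₀⟩ w) with
    | refl => exact ⟨β w₀, Set.subset_biUnion_of_mem hw₀, le_rfl, le_rfl, hβ w₀⟩
    | @tail w w' _ hww' ih =>
      obtain ⟨s, hsS, hs₀, hsw, hs⟩ := ih
      obtain ⟨u, hu, v, hv, huv⟩ := hadj w w' hww'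
      exact ⟨s ∪ β w', Set.union_subset hsS (Set.subset_biUnion_of_mem w'.2),
        hs₀.trans Set.subset_union_left, Set.subset_union_right,
        SimpleGraph.connected_induce_union hs.preconnected (hβ w').preconnected (hsw hu) hv huv⟩
  refine SimpleGraph.induce_connected_of_patches u₀ (Set.mem_biUnion hw₀ hu₀) fun hv => ?_
  obtain ⟨w, hw, hv⟩ := Set.mem_iUnion₂.1 hv
  obtain ⟨s, hsS, hs₀, hsw, hs⟩ := patch ⟨w, hw⟩
  exact ⟨s, hsS, hs₀ hu₀, hsw hv, hs.preconnected _ _⟩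

theorem IsMinor.trans {M : SimpleGraph U} {H : SimpleGraph W} {G : SimpleGraph V}
    (hM : IsMinor M H) (hH : IsMinor H G) : IsMinor M G := by
  obtain ⟨B, hBconn, hBdisj, hBadj⟩ := hM
  obtain ⟨β, hβconn, hβdisj, hβadj⟩ := hH
  refine ⟨fun m => ⋃ w ∈ B m, β w,
    fun m => induce_biUnion_connected (hBconn m) hβconn hβadj, fun m m' hmm' => ?_,
    fun m m' hmm' => ?_⟩
  · refine Set.disjoint_iUnion₂_left.2 fun w hw =>
      Set.disjoint_iUnion₂_right.2 fun w' hw' => hβdisj ?_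
    rintro rfl
    exact Set.disjoint_left.1 (hBdisj hmm') hw hw'
  · obtain ⟨w, hw, w', hw', hww'⟩ := hBadj m m' hmm'
    obtain ⟨u, hu, v, hv, huv⟩ := hβadj w w' hww'
    exact ⟨u, Set.mem_biUnion hw hu, v, Set.mem_biUnion hw' hv, huv⟩

theorem nonempty_coloring_of_induce {α : Type} [Nontrivial α] {G : SimpleGraph W} {S : Set W}
    (c : (G.induce S).Coloring α) (hout : ∀ v ∉ S, ∃ w ∈ S, ∀ x, G.Adj v x → x = w) :
    Nonempty (G.Coloring α) := by
  classical
  choose nbr hnbrS hnbr using hout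
  let col : W → α := fun v =>
    if hv : v ∈ S then c ⟨v, hv⟩ else (exists_ne (c ⟨nbr v hv, hnbrS v hv⟩)).choose
  have hcol : ∀ v (hv : v ∉ S), col v ≠ c ⟨nbr v hv, hnbrS v hv⟩ := fun v hv => by
    simpa only [col, dif_neg hv] using (exists_ne _).choose_spec
  have key : ∀ u v, G.Adj u v → u ∈ S → col u ≠ col v := by
    intro u v huv hu
    by_cases hv : v ∈ S
    · simpa only [col, dif_pos hu, dif_pos hv] using
        c.valid (show (G.induce S).Adj ⟨u, hu⟩ ⟨v, hv⟩ from huv)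
    · obtain rfl := hnbr v hv u huv.symm
      simpa only [col, dif_pos hu] using (hcol v hv).symm
  refine ⟨SimpleGraph.Coloring.mk col fun {u v} huv => ?_⟩
  by_cases hu : u ∈ S
  · exact key u v huv hu
  by_cases hv : v ∈ S
  · exact (key v u huv.symm hv).symm
  · exact absurd (hnbr u hu v huv ▸ hnbrS u hu) hv

end Minors

section Walks

variable {V A : Type} {tl hd : A → V} {u v w : V} {p p' : List A} {a : A}

theorem isArcWalk_append :
    IsArcWalk tl hd u v (p ++ p') ↔ ∃ w, IsArcWalk tl hd u w p ∧ IsArcWalk tl hd w v p' := by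
  induction p generalizing u with
  | nil => exact ⟨fun h => ⟨u, rfl, h⟩, fun ⟨_, rfl, h⟩ => h⟩
  | cons b p ih =>
    simp only [List.cons_append, IsArcWalk, ih]
    exact ⟨fun ⟨h, w, hp, hp'⟩ => ⟨w, ⟨h, hp⟩, hp'⟩,
      fun ⟨w, ⟨h, hp⟩, hp'⟩ => ⟨h, w, hp, hp'⟩⟩

theorem isArcWalk_concat :
    IsArcWalk tl hd u v (p ++ [a]) ↔ IsArcWalk tl hd u (tl a) p ∧ hd a = v := by
  simp only [isArcWalk_append, IsArcWalk]
  exact ⟨fun ⟨_, hp, rfl, h⟩ => ⟨hp, h⟩, fun ⟨hp, h⟩ => ⟨_, hp, rfl, h⟩⟩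

theorem IsArcWalk.split (hw : IsArcWalk tl hd u v p) (ha : a ∈ p) :
    ∃ X Y, p = X ++ a :: Y ∧ IsArcWalk tl hd u (tl a) X ∧ IsArcWalk tl hd (hd a) v Y := by
  obtain ⟨X, Y, rfl⟩ := List.append_of_mem ha
  obtain ⟨w, hX, rfl, hY⟩ := isArcWalk_append.1 hw
  exact ⟨X, Y, rfl, hX, hY⟩

theorem IsArcWalk.exists_hd_eq (hw : IsArcWalk tl hd u v p) (huv : u ≠ v) :
    ∃ a ∈ p, hd a = v := by
  rcases List.eq_nil_or_concat p with rfl | ⟨p, a, rfl⟩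
  · exact absurd hw huv
  · rw [List.concat_eq_append, isArcWalk_concat] at hw
    exact ⟨a, by simp, hw.2⟩

theorem Acyclic.tl_ne_hd (hacyc : Acyclic tl hd) (a : A) : tl a ≠ hd a := fun h =>
  List.cons_ne_nil a [] (hacyc _ _ ⟨rfl, h.symm⟩)

theorem Acyclic.nodup (hacyc : Acyclic tl hd) (hw : IsArcWalk tl hd u v p) : p.Nodup := by
  induction p generalizing u with
  | nil => exact List.nodup_nil
  | cons a p ih =>
    refine List.nodup_cons.2 ⟨fun ha => ?_, ih hw.2⟩
    obtain ⟨X, _, -, hX, -⟩ := hw.2.split ha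
    exact List.cons_ne_nil a X (hacyc _ _ ⟨rfl, hX⟩)

theorem Acyclic.wellFounded [Finite A] (hacyc : Acyclic tl hd) :
    WellFounded fun a b : A => hd a = tl b := by
  have hwalk : ∀ a b, Relation.TransGen (fun a b : A => hd a = tl b) a b →
      ∃ p, IsArcWalk tl hd (tl a) (tl b) (a :: p) := by
    intro a b h
    induction h with
    | single h => exact ⟨[], rfl, h⟩
    | @tail b c _ hbc ih =>
      obtain ⟨p, hp⟩ := ih
      exact ⟨p ++ [b], isArcWalk_concat.2 ⟨hp, hbc⟩⟩
  have : Std.Irrefl (Relation.TransGen fun a b : A => hd a = tl b) :=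
    ⟨fun a h => by
      obtain ⟨p, hp⟩ := hwalk a a h
      exact List.cons_ne_nil a p (hacyc _ _ hp)⟩
  exact (Finite.wellFounded_of_trans_of_irrefl
    (Relation.TransGen fun a b : A => hd a = tl b)).mono fun _ _ h => .single h

theorem Acyclic.wellFounded_adj [Finite A] (hacyc : Acyclic tl hd) :
    WellFounded fun u v : V => ∃ a, tl a = u ∧ hd a = v := by
  have htl : ∀ a : A, Acc (fun u v : V => ∃ a, tl a = u ∧ hd a = v) (tl a) := fun a =>
    hacyc.wellFounded.induction a fun a ih =>
      Acc.intro _ fun _ ⟨b, hb, hba⟩ => hb ▸ ih b hba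
  exact ⟨fun v => Acc.intro v fun _ ⟨a, ha, _⟩ => ha ▸ htl a⟩

theorem IsArcWalk.restrict (e : A) (hw : IsArcWalk tl hd u v p) (he : e ∉ p) :
    ∃ P' : List {b // b ≠ e}, IsArcWalk (fun b => tl b.1) (fun b => hd b.1) u v P' ∧
      P'.map Subtype.val = p := by
  induction p generalizing u with
  | nil => exact ⟨[], hw, rfl⟩
  | cons a p ih =>
    obtain ⟨P', hP', rfl⟩ := ih hw.2 (fun h => he (List.mem_cons_of_mem a h))
    exact ⟨⟨a, by rintro rfl; exact he List.mem_cons_self⟩ :: P', ⟨hw.1, hP'⟩, rfl⟩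

end Walks

section Lam

variable {V A : Type} [Finite A] {tl hd : A → V} {s v : V} {P Q : List A}

theorem lam_bddAbove (hsv : s ≠ v) :
    BddAbove {k | ∃ P : Fin k → List A, (∀ i, IsArcWalk tl hd s v (P i)) ∧
      ∀ i j : Fin k, i ≠ j → ∀ a, a ∈ P i → a ∉ P j} := by
  refine ⟨Nat.card A, fun k ⟨P, hP, hdisj⟩ => ?_⟩
  have hne : ∀ i, P i ≠ [] := fun i h => hsv (by simpa [h, IsArcWalk] using hP i)
  have hinj : Function.Injective fun i => (P i).head (hne i) := fun i j hij => by
    by_contra hij'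
    have hij : (P i).head (hne i) = (P j).head (hne j) := hij
    exact hdisj i j hij' _ (List.head_mem (hne i)) (hij ▸ List.head_mem (hne j))
  simpa using Nat.card_le_card_of_injective _ hinj

theorem two_le_lam (hsv : s ≠ v) (hP : IsArcWalk tl hd s v P)
    (hQ : IsArcWalk tl hd s v Q) (hPQ : P.Disjoint Q) : 2 ≤ lam tl hd s v := by
  refine le_csSup (lam_bddAbove hsv) ⟨![P, Q], fun i => ?_, fun i j hij a => ?_⟩
  · fin_cases i <;> assumption
  · fin_cases i <;> fin_cases j <;> simp_all [List.disjoint_right.1 hPQ, List.disjoint_left.1 hPQ]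

theorem exists_disjoint_walks_of_two_le_lam (hsv : s ≠ v) (h2 : 2 ≤ lam tl hd s v) :
    ∃ P Q, IsArcWalk tl hd s v P ∧ IsArcWalk tl hd s v Q ∧ P.Disjoint Q := by
  unfold lam at h2
  obtain ⟨P, hP, hdisj⟩ :=
    Nat.sSup_mem (by exact ⟨0, Fin.elim0, fun i : Fin 0 => i.elim0, fun i : Fin 0 => i.elim0⟩)
      (lam_bddAbove (tl := tl) (hd := hd) hsv)
  exact ⟨P ⟨0, by omega⟩, P ⟨1, by omega⟩, hP _, hP _,
    fun a ha ha' => hdisj _ _ (by simp) a ha ha'⟩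

theorem two_le_lam_erase (e : A) (hsv : s ≠ v) (hP : IsArcWalk tl hd s v P)
    (hQ : IsArcWalk tl hd s v Q) (hPQ : P.Disjoint Q) (heP : e ∉ P) (heQ : e ∉ Q) :
    2 ≤ lam (fun b : {b // b ≠ e} => tl b.1) (fun b => hd b.1) s v := by
  obtain ⟨P', hP', rfl⟩ := hP.restrict e heP
  obtain ⟨Q', hQ', rfl⟩ := hQ.restrict e heQ
  exact two_le_lam hsv hP' hQ' fun a ha ha' =>
    hPQ (List.mem_map_of_mem ha) (List.mem_map_of_mem ha')

end Lam

section InDeg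

variable {V A : Type} {hd : A → V} {v : V} {c c' : A}

theorem two_le_inDeg [Finite A] (hne : c ≠ c') (hc : hd c = v) (hc' : hd c' = v) :
    2 ≤ inDeg hd v := by
  rw [inDeg, ← Set.ncard_pair hne]
  exact Set.ncard_le_ncard (by rintro x (rfl | rfl) <;> assumption) (Set.toFinite _)

theorem two_le_inDeg_of_ne_one [Finite A] (hc : hd c = v) (h : inDeg hd v ≠ 1) :
    2 ≤ inDeg hd v := by
  have : 0 < inDeg hd v := (Set.ncard_pos (Set.toFinite _)).2 ⟨c, hc⟩
  omega

theorem exists_ne_of_two_le_inDeg (h : 2 ≤ inDeg hd v) (c : A) : ∃ b, hd b = v ∧ b ≠ c :=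
  Set.exists_ne_of_one_lt_ncard h c

theorem exists_hd_eq_of_inDeg_ne_zero (h : inDeg hd v ≠ 0) : ∃ c, hd c = v :=
  Set.nonempty_of_ncard_ne_zero h

theorem eq_of_inDeg_eq_one (h : inDeg hd v = 1) (hc : hd c = v) (hc' : hd c' = v) : c = c' := by
  obtain ⟨x, hx⟩ := Set.ncard_eq_one.1 h
  have hc : c ∈ ({x} : Set A) := hx ▸ hc
  have hc' : c' ∈ ({x} : Set A) := hx ▸ hc'
  exact hc.trans hc'.symm

end InDeg

section Subtrees

variable {V A : Type} {tl hd : A → V} {s t v : V} {a b c : A}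

open Classical in
noncomputable def inArc (hd : A → V) (v : V) : Option A :=
  if h : ∃ a, hd a = v then some h.choose else none

theorem hd_of_inArc_eq_some (h : inArc hd v = some a) : hd a = v := by
  unfold inArc at h
  split_ifs at h with hv
  cases h
  exact hv.choose_spec

theorem exists_inArc_eq_some (h : ∃ a, hd a = v) : ∃ a, inArc hd v = some a :=
  ⟨_, by classical exact dif_pos h⟩

theorem inArc_eq_some_of_inDeg_eq_one (h1 : inDeg hd v = 1) (hc : hd c = v) :
    inArc hd v = some c := by
  obtain ⟨a, ha⟩ := exists_inArc_eq_some ⟨c, hc⟩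
  rw [ha, eq_of_inDeg_eq_one h1 (hd_of_inArc_eq_some ha) hc]

/-- The unique arc into `tl b` when `inDeg hd (tl b) = 1`; junk otherwise. -/
noncomputable def parent (tl hd : A → V) (b : A) : A := (inArc hd (tl b)).getD b

theorem inArc_tl_eq_some_parent (h : inDeg hd (tl b) = 1) :
    inArc hd (tl b) = some (parent tl hd b) := by
  obtain ⟨a, ha⟩ :=
    exists_inArc_eq_some (exists_hd_eq_of_inDeg_ne_zero (show inDeg hd (tl b) ≠ 0 by omega))
  simp [parent, ha]

theorem hd_parent (h : inDeg hd (tl b) = 1) : hd (parent tl hd b) = tl b :=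
  hd_of_inArc_eq_some (inArc_tl_eq_some_parent h)

theorem subtreeRel_parent (h : inDeg hd (tl b) = 1) : SubtreeRel tl hd (parent tl hd b) b :=
  ⟨hd_parent h, (hd_parent h).symm ▸ h⟩

theorem parent_eq_of_subtreeRel (h : SubtreeRel tl hd a b) : parent tl hd b = a :=
  have h1 : inDeg hd (tl b) = 1 := h.1 ▸ h.2
  eq_of_inDeg_eq_one h1 (hd_parent h1) h.1

variable [Finite A] (hacyc : Acyclic tl hd)

noncomputable def root : A → A :=
  hacyc.wellFounded.fix fun b IH =>
    if h : inDeg hd (tl b) = 1 then IH (parent tl hd b) (hd_parent h) else b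

/-- The arcs of the subtree of `b` on the way from its root to `b`. -/
noncomputable def chain : A → List A :=
  hacyc.wellFounded.fix fun b IH =>
    (if h : inDeg hd (tl b) = 1 then IH (parent tl hd b) (hd_parent h) else []) ++ [b]

theorem root_eq (b : A) :
    root hacyc b = if inDeg hd (tl b) = 1 then root hacyc (parent tl hd b) else b := by
  rw [root, WellFounded.fix_eq]
  split_ifs <;> rfl

theorem chain_eq (b : A) : chain hacyc b =
    (if inDeg hd (tl b) = 1 then chain hacyc (parent tl hd b) else []) ++ [b] := by
  rw [chain, WellFounded.fix_eq]
  split_ifs <;> rfl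

theorem root_eq_of_subtreeRel (h : SubtreeRel tl hd a b) : root hacyc a = root hacyc b := by
  rw [root_eq hacyc b, if_pos (h.1 ▸ h.2), parent_eq_of_subtreeRel h]

theorem mk_root (b : A) : Quot.mk (SubtreeRel tl hd) (root hacyc b) = Quot.mk _ b := by
  induction b using hacyc.wellFounded.induction with
  | _ b ih =>
    rw [root_eq]
    split_ifs with h
    · rw [ih _ (hd_parent h)]
      exact Quot.sound (subtreeRel_parent h)
    · rfl

theorem root_eq_root_iff :
    root hacyc a = root hacyc b ↔ Quot.mk (SubtreeRel tl hd) a = Quot.mk _ b := by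
  refine ⟨fun h => ?_, fun h => ?_⟩
  · rw [← mk_root hacyc a, h, mk_root]
  · exact congrArg (Quot.lift (root hacyc) fun _ _ => root_eq_of_subtreeRel hacyc) h

theorem isArcWalk_chain (b : A) :
    IsArcWalk tl hd (tl (root hacyc b)) (hd b) (chain hacyc b) := by
  induction b using hacyc.wellFounded.induction with
  | _ b ih =>
    rw [chain_eq, root_eq]
    split_ifs with h
    · exact isArcWalk_concat.2 ⟨(hd_parent h) ▸ ih _ (hd_parent h), rfl⟩
    · exact ⟨rfl, rfl⟩

theorem self_mem_chain (b : A) : b ∈ chain hacyc b := by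
  rw [chain_eq]
  simp

theorem root_mem_chain (b : A) : root hacyc b ∈ chain hacyc b := by
  induction b using hacyc.wellFounded.induction with
  | _ b ih =>
    rw [chain_eq, root_eq]
    split_ifs with h
    · exact List.mem_append_left _ (ih _ (hd_parent h))
    · simp

theorem root_eq_of_mem_chain (hc : c ∈ chain hacyc b) : root hacyc c = root hacyc b := by
  induction b using hacyc.wellFounded.induction with
  | _ b ih =>
    rw [chain_eq] at hc
    split_ifs at hc with h <;>
      simp only [List.mem_append, List.mem_singleton, List.mem_nil_iff, false_or] at hc
    · rcases hc with hc | rfl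
      · rw [ih _ (hd_parent h) hc, root_eq_of_subtreeRel hacyc (subtreeRel_parent h)]
      · rfl
    · rw [hc]

theorem inDeg_hd_eq_one_of_mem_chain (hc : c ∈ chain hacyc b) (hcb : c ≠ b) :
    inDeg hd (hd c) = 1 := by
  induction b using hacyc.wellFounded.induction with
  | _ b ih =>
    rw [chain_eq] at hc
    split_ifs at hc with h <;>
      simp only [List.mem_append, List.mem_singleton, List.mem_nil_iff, false_or] at hc
    · rcases hc with hc | rfl
      · by_cases hcp : c = parent tl hd b
        · rw [hcp, hd_parent h, h]
        · exact ih _ (hd_parent h) hc hcp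
      · exact absurd rfl hcb
    · exact absurd hc hcb

/-- In a network with no arc into `s`, a walk from `s` through `b` runs along the whole chain
of `b`, since every node inside the chain has in-degree one. -/
theorem exists_eq_append_chain (hs : ∀ c, hd c ≠ s) {P : List A}
    (hP : IsArcWalk tl hd s t P) (hb : b ∈ P) :
    ∃ X Y, P = X ++ chain hacyc b ++ Y ∧
      IsArcWalk tl hd s (tl (root hacyc b)) X ∧ IsArcWalk tl hd (hd b) t Y := by
  induction b using hacyc.wellFounded.induction generalizing t P with
  | _ b ih =>
    obtain ⟨X, Y, rfl, hX, hY⟩ := hP.split hb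
    by_cases h : inDeg hd (tl b) = 1
    · rcases List.eq_nil_or_concat X with rfl | ⟨X, c, rfl⟩
      · exact absurd (hd_parent h ▸ hX.symm) (hs _)
      rw [List.concat_eq_append] at hX ⊢
      have hc : hd c = tl b := (isArcWalk_concat.1 hX).2
      obtain rfl : c = parent tl hd b := eq_of_inDeg_eq_one h hc (hd_parent h)
      obtain ⟨X₀, Y₀, hsplit, hX₀, hY₀⟩ := ih _ hc hX (by simp)
      obtain rfl : Y₀ = [] := hacyc _ _ (hc ▸ hY₀)
      refine ⟨X₀, Y, ?_, by rwa [root_eq, if_pos h], hY⟩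
      rw [hsplit, chain_eq hacyc b, if_pos h]
      simp
    · refine ⟨X, Y, ?_, by rwa [root_eq, if_neg h], hY⟩
      rw [chain_eq, if_neg h]
      simp

theorem root_mem_of_mem (hs : ∀ c, hd c ≠ s) {P : List A} (hP : IsArcWalk tl hd s t P)
    (hb : b ∈ P) : root hacyc b ∈ P := by
  obtain ⟨X, Y, rfl, -⟩ := exists_eq_append_chain hacyc hs hP hb
  simp [root_mem_chain]

end Subtrees

section TwoMinimal

variable {V A : Type} [Finite A] {tl hd : A → V} {s : V} {T : Set V}

theorem TwoMinimal.exists_essential_walks (hsT : s ∉ T) (hmin : TwoMinimal tl hd s T) (e : A) :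
    ∃ t P Q, IsArcWalk tl hd s t P ∧ IsArcWalk tl hd s t Q ∧ P.Disjoint Q ∧ e ∈ P ∧
      ∀ P', IsArcWalk tl hd s t P' → P'.Disjoint Q → e ∈ P' := by
  obtain ⟨t, ht, hlt⟩ := hmin.2 e
  have hst : s ≠ t := fun h => hsT (h ▸ ht)
  have essential : ∀ P Q, IsArcWalk tl hd s t P → IsArcWalk tl hd s t Q → P.Disjoint Q →
      e ∉ Q → e ∈ P := fun P Q hP hQ hPQ heQ => by
    by_contra heP
    exact absurd (two_le_lam_erase e hst hP hQ hPQ heP heQ) (by omega)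
  obtain ⟨P, Q, hP, hQ, hPQ⟩ := exists_disjoint_walks_of_two_le_lam hst (hmin.1 t ht)
  by_cases heQ : e ∈ Q
  · exact ⟨t, Q, P, hQ, hP, hPQ.symm, heQ, fun P' hP' hP'P =>
      essential P' P hP' hP hP'P fun heP => hPQ heP heQ⟩
  · exact ⟨t, P, Q, hP, hQ, hPQ, essential P Q hP hQ hPQ heQ, fun P' hP' hP'Q =>
      essential P' Q hP' hQ hP'Q heQ⟩

theorem TwoMinimal.hd_ne_source (hsT : s ∉ T) (hacyc : Acyclic tl hd)
    (hmin : TwoMinimal tl hd s T) (e : A) : hd e ≠ s := fun he => by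
  obtain ⟨t, P, -, hP, -, -, heP, -⟩ := hmin.exists_essential_walks hsT e
  obtain ⟨X, -, -, hX, -⟩ := hP.split heP
  simpa using hacyc _ _ (isArcWalk_concat.2 ⟨hX, he⟩)

theorem TwoMinimal.exists_hd_eq_tl (hsT : s ∉ T) (hmin : TwoMinimal tl hd s T) (e : A)
    (he : tl e ≠ s) : ∃ c, hd c = tl e := by
  obtain ⟨t, P, -, hP, -, -, heP, -⟩ := hmin.exists_essential_walks hsT e
  obtain ⟨X, -, -, hX, -⟩ := hP.split heP
  obtain ⟨c, -, hc⟩ := hX.exists_hd_eq he.symm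
  exact ⟨c, hc⟩

theorem TwoMinimal.two_le_inDeg_of_mem (hsT : s ∉ T) (hmin : TwoMinimal tl hd s T) {t : V}
    (ht : t ∈ T) : 2 ≤ inDeg hd t := by
  have hst : s ≠ t := fun h => hsT (h ▸ ht)
  obtain ⟨P, Q, hP, hQ, hPQ⟩ := exists_disjoint_walks_of_two_le_lam hst (hmin.1 t ht)
  obtain ⟨x, hxP, hx⟩ := hP.exists_hd_eq hst
  obtain ⟨y, hyQ, hy⟩ := hQ.exists_hd_eq hst
  exact two_le_inDeg (by rintro rfl; exact hPQ hxP hyQ) hx hy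

/-- If two arcs into one node lay in the same subtree, a path through one of them could be
rerouted along the subtree to the other, so deleting it would keep two arc-disjoint paths. -/
theorem TwoMinimal.mk_ne_mk (hsT : s ∉ T) (hacyc : Acyclic tl hd)
    (hmin : TwoMinimal tl hd s T) {b₁ b₂ : A} (hne : b₁ ≠ b₂) (hhd : hd b₁ = hd b₂) :
    Quot.mk (SubtreeRel tl hd) b₁ ≠ Quot.mk _ b₂ := by
  intro hq
  have hroot : root hacyc b₁ = root hacyc b₂ := (root_eq_root_iff hacyc).2 hq
  have hs := hmin.hd_ne_source hsT hacyc
  obtain ⟨t, P, Q, hP, hQ, hPQ, hb₂P, hess⟩ := hmin.exists_essential_walks hsT b₂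
  obtain ⟨X, Y, rfl, hX, hY⟩ := exists_eq_append_chain hacyc hs hP hb₂P
  have hP' : IsArcWalk tl hd s t (X ++ chain hacyc b₁ ++ Y) :=
    isArcWalk_append.2
      ⟨hd b₁, isArcWalk_append.2 ⟨_, hroot ▸ hX, isArcWalk_chain hacyc b₁⟩, hhd ▸ hY⟩
  have hP'Q : (X ++ chain hacyc b₁ ++ Y).Disjoint Q := by
    refine List.disjoint_append_left.2 ⟨List.disjoint_append_left.2
      ⟨fun a ha => hPQ (by simp [ha]), fun c hc hcQ => ?_⟩, fun a ha => hPQ (by simp [ha])⟩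
    -- `Q` would run through the root of the subtree, which lies on `P`
    have hrQ := root_mem_of_mem hacyc hs hQ hcQ
    rw [root_eq_of_mem_chain hacyc hc, hroot] at hrQ
    exact hPQ (by simp [root_mem_chain]) hrQ
  have hnodup := List.nodup_append.1 (hacyc.nodup hP)
  have hb₂X : b₂ ∉ X := fun h =>
    (List.nodup_append.1 hnodup.1).2.2 _ h _ (self_mem_chain hacyc b₂) rfl
  have hb₂Y : b₂ ∉ Y := fun h => hnodup.2.2 _ (by simp [self_mem_chain]) _ h rfl
  have hb₂c : b₂ ∉ chain hacyc b₁ := fun h => by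
    have := inDeg_hd_eq_one_of_mem_chain hacyc h hne.symm
    have := two_le_inDeg hne hhd rfl
    omega
  simpa [hb₂X, hb₂Y, hb₂c] using hess _ hP' hP'Q

end TwoMinimal

section CodingGraph

variable {V A : Type} {tl hd : A → V}

def ownedNodes (C : Subtrees tl hd) : Set V :=
  {v | ∃ a, inArc hd v = some a ∧ Quot.mk _ a = C}

/-- The subtree graph taken with respect to the chosen arcs `inArc`: at every node, the subtree
of the chosen incoming arc is joined to the subtree of each other incoming arc. At nodes of
in-degree two this is the adjacency of `subtreeGraph`. -/
def codingGraph (tl hd : A → V) : SimpleGraph (Subtrees tl hd) :=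
  SimpleGraph.fromRel fun C C' =>
    ∃ a b, inArc hd (hd b) = some a ∧ Quot.mk _ a = C ∧ Quot.mk _ b = C'

theorem Acyclic.topology_adj (hacyc : Acyclic tl hd) (a : A) :
    (topology tl hd).Adj (hd a) (tl a) :=
  ⟨(hacyc.tl_ne_hd a).symm, a, Or.inr ⟨rfl, rfl⟩⟩

variable {a b : A}

theorem tl_mem_ownedNodes (h : inDeg hd (tl b) = 1) :
    tl b ∈ ownedNodes (Quot.mk (SubtreeRel tl hd) b) :=
  ⟨parent tl hd b, inArc_tl_eq_some_parent h, Quot.sound (subtreeRel_parent h)⟩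

variable [Finite A]

theorem eq_of_mk_eq (hacyc : Acyclic tl hd) (htl : inDeg hd (tl b) ≠ 1)
    (hhd : inDeg hd (hd b) ≠ 1) (h : Quot.mk (SubtreeRel tl hd) a = Quot.mk _ b) : a = b := by
  by_contra hab
  have hroot : root hacyc a = b := by rw [(root_eq_root_iff hacyc).2 h, root_eq, if_neg htl]
  have := inDeg_hd_eq_one_of_mem_chain hacyc (root_mem_chain hacyc a) (hroot ▸ Ne.symm hab)
  exact hhd (hroot ▸ this)

theorem inArc_hd_root (hacyc : Acyclic tl hd) (h : inArc hd (hd a) = some a) :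
    inArc hd (hd (root hacyc a)) = some (root hacyc a) := by
  induction a using hacyc.wellFounded.induction with
  | _ a ih =>
    rw [root_eq]
    split_ifs with h1
    · exact ih _ (hd_parent h1) (inArc_eq_some_of_inDeg_eq_one ((hd_parent h1).symm ▸ h1) rfl)
    · exact h

/-- The owned nodes of a subtree form an out-tree hanging from the head of its root arc. -/
theorem connected_ownedNodes (hacyc : Acyclic tl hd) {C : Subtrees tl hd}
    (hC : (ownedNodes C).Nonempty) : ((topology tl hd).induce (ownedNodes C)).Connected := by
  obtain ⟨v, a, ha, rfl⟩ := hC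
  have ha' : inArc hd (hd a) = some a := (hd_of_inArc_eq_some ha).symm ▸ ha
  refine induce_connected_of_wellFounded_descent ⟨_, inArc_hd_root hacyc ha', mk_root hacyc a⟩
    hacyc.wellFounded_adj ?_
  rintro _ ⟨a', ha'', hC⟩ hne
  obtain rfl := hd_of_inArc_eq_some ha''
  by_cases h1 : inDeg hd (tl a') = 1
  · exact ⟨tl a', hC ▸ tl_mem_ownedNodes h1, ⟨a', rfl, rfl⟩, hacyc.topology_adj a'⟩
  · refine absurd ?_ hne
    rw [← (root_eq_root_iff hacyc).2 hC, root_eq, if_neg h1]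

theorem exists_topology_adj_of_inArc (hacyc : Acyclic tl hd) (hab : inArc hd (hd b) = some a)
    (hne : Quot.mk (SubtreeRel tl hd) a ≠ Quot.mk _ b)
    (hb : (ownedNodes (Quot.mk (SubtreeRel tl hd) b)).Nonempty) :
    ∃ u ∈ ownedNodes (Quot.mk (SubtreeRel tl hd) a),
      ∃ v ∈ ownedNodes (Quot.mk (SubtreeRel tl hd) b), (topology tl hd).Adj u v := by
  obtain ⟨v, b', hb', hb'b⟩ := hb
  have hab' : a ≠ b := by rintro rfl; exact hne rfl
  have htl : inDeg hd (tl b) = 1 := by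
    by_contra htl
    have := two_le_inDeg hab' (hd_of_inArc_eq_some hab) rfl
    obtain rfl := eq_of_mk_eq hacyc htl (by omega) hb'b
    obtain rfl := hd_of_inArc_eq_some hb'
    exact hab' (Option.some_injective _ (hab.symm.trans hb'))
  exact ⟨hd b, ⟨a, hab, rfl⟩, tl b, tl_mem_ownedNodes htl, hacyc.topology_adj b⟩

theorem isMinor_codingGraph_induce (hacyc : Acyclic tl hd) :
    IsMinor ((codingGraph tl hd).induce {C | (ownedNodes C).Nonempty}) (topology tl hd) := by
  refine ⟨fun C => ownedNodes C.1, fun C => connected_ownedNodes hacyc C.2,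
    fun C C' hCC' => ?_, ?_⟩
  · refine Set.disjoint_left.2 ?_
    rintro v ⟨a, ha, hC⟩ ⟨a', ha', hC'⟩
    obtain rfl := Option.some_injective _ (ha.symm.trans ha')
    exact hCC' (Subtype.ext (hC.symm.trans hC'))
  · rintro ⟨-, hC⟩ ⟨-, hC'⟩
      ⟨hne, ⟨a, b, hab, rfl, rfl⟩ | ⟨a, b, hab, rfl, rfl⟩⟩
    · exact exists_topology_adj_of_inArc hacyc hab hne hC'
    · obtain ⟨u, hu, v, hv, huv⟩ := exists_topology_adj_of_inArc hacyc hab hne.symm hC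
      exact ⟨v, hv, u, hu, huv.symm⟩

/-- A subtree owning no node is a single arc `b` that was not chosen at its head, and its only
neighbour is the subtree of the arc chosen there. -/
theorem exists_adj_eq_of_not_owned (hacyc : Acyclic tl hd) {C : Subtrees tl hd}
    (hC : ¬(ownedNodes C).Nonempty) :
    ∃ C', (ownedNodes C').Nonempty ∧ ∀ X, (codingGraph tl hd).Adj C X → X = C' := by
  obtain ⟨b, rfl⟩ := Quot.exists_rep C
  obtain ⟨a₀, ha₀⟩ := exists_inArc_eq_some ⟨b, rfl⟩
  have hne : a₀ ≠ b := by rintro rfl; exact hC ⟨_, a₀, ha₀, rfl⟩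
  have htl : inDeg hd (tl b) ≠ 1 := fun h => hC ⟨_, tl_mem_ownedNodes h⟩
  have := two_le_inDeg hne (hd_of_inArc_eq_some ha₀) rfl
  refine ⟨Quot.mk _ a₀, ⟨_, a₀, ha₀, rfl⟩, ?_⟩
  rintro X ⟨-, ⟨a, b', hab', ha, rfl⟩ | ⟨a, b', hab', rfl, hb'⟩⟩
  · obtain rfl := eq_of_mk_eq hacyc htl (by omega) ha
    exact absurd ⟨_, a, (hd_of_inArc_eq_some hab').symm ▸ hab', rfl⟩ hC
  · obtain rfl := eq_of_mk_eq hacyc htl (by omega) hb'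
    obtain rfl := Option.some_injective _ (ha₀.symm.trans hab')
    rfl

end CodingGraph

section ProjectiveLine

variable {F : Type} [Field F]

theorem span_pair_eq_top_of_det_ne_zero {x y : F × F} (h : x.1 * y.2 - x.2 * y.1 ≠ 0) :
    Submodule.span F {x, y} = ⊤ := by
  refine eq_top_iff.2 fun z _ => Submodule.mem_span_pair.2
    ⟨(z.1 * y.2 - z.2 * y.1) / (x.1 * y.2 - x.2 * y.1),
      (x.1 * z.2 - x.2 * z.1) / (x.1 * y.2 - x.2 * y.1), ?_⟩
  ext <;> simp only [Prod.fst_add, Prod.snd_add, Prod.smul_fst, Prod.smul_snd, smul_eq_mul] <;>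
    rw [div_mul_eq_mul_div, div_mul_eq_mul_div, ← add_div, div_eq_iff h] <;> ring

/-- Representatives of the `q + 1` points of the projective line over `F`. -/
def projPoint : Option F → F × F
  | none => (0, 1)
  | some x => (1, x)

theorem projPoint_ne_zero (x : Option F) : projPoint x ≠ 0 := by
  cases x <;> simp [projPoint]

theorem span_projPoint_pair {x y : Option F} (hxy : x ≠ y) :
    Submodule.span F {projPoint x, projPoint y} = ⊤ := by
  refine span_pair_eq_top_of_det_ne_zero ?_
  rcases x with _ | x <;> rcases y with _ | y <;> simp_all [projPoint, sub_eq_zero, eq_comm]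

end ProjectiveLine

section Coding

variable {V A F : Type} [Finite A] [Field F] {tl hd : A → V} {s : V} {T : Set V}

theorem span_incoming_eq_top (hsT : s ∉ T) (hacyc : Acyclic tl hd)
    (hmin : TwoMinimal tl hd s T) (κ : (codingGraph tl hd).Coloring (Option F)) {v : V}
    (hv : 2 ≤ inDeg hd v) :
    Submodule.span F ((fun a => projPoint (κ (Quot.mk _ a))) '' {b | hd b = v}) = ⊤ := by
  obtain ⟨a, ha⟩ :=
    exists_inArc_eq_some (exists_hd_eq_of_inDeg_ne_zero (show inDeg hd v ≠ 0 by omega))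
  obtain ⟨b, hb, hba⟩ := exists_ne_of_two_le_inDeg hv a
  have hadj : (codingGraph tl hd).Adj (Quot.mk _ a) (Quot.mk _ b) :=
    ⟨hmin.mk_ne_mk hsT hacyc hba.symm ((hd_of_inArc_eq_some ha).trans hb.symm),
      Or.inl ⟨a, b, hb ▸ ha, rfl, rfl⟩⟩
  refine top_unique ((span_projPoint_pair (κ.valid hadj)).ge.trans (Submodule.span_mono ?_))
  rintro _ (rfl | rfl)
  exacts [⟨a, hd_of_inArc_eq_some ha, rfl⟩, ⟨b, hb, rfl⟩]

theorem isCodingSolution_of_coloring (hsT : s ∉ T) (hacyc : Acyclic tl hd)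
    (hmin : TwoMinimal tl hd s T) (κ : (codingGraph tl hd).Coloring (Option F)) :
    IsCodingSolution tl hd s T fun a => projPoint (κ (Quot.mk (SubtreeRel tl hd) a)) := by
  refine ⟨fun a => projPoint_ne_zero _, fun a ha => ?_,
    fun t ht => span_incoming_eq_top hsT hacyc hmin κ (hmin.two_le_inDeg_of_mem hsT ht)⟩
  obtain ⟨c, hc⟩ := hmin.exists_hd_eq_tl hsT a ha
  by_cases h1 : inDeg hd (tl a) = 1
  · have hca : Quot.mk (SubtreeRel tl hd) c = Quot.mk _ a := Quot.sound ⟨hc, hc ▸ h1⟩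
    exact Submodule.subset_span
      ⟨c, hc, congrArg (fun C : Subtrees tl hd => projPoint (κ C)) hca⟩
  · rw [span_incoming_eq_top hsT hacyc hmin κ (two_le_inDeg_of_ne_one hc h1)]
    exact Submodule.mem_top

end Coding

theorem NCMinor_of_hadwiger_general
    (q : ℕ) (F : Type) [Field F] [Fintype F] (hF : Fintype.card F = q)
    (hHadwiger : ∀ (W : Type) [Fintype W] (H : SimpleGraph W),
      ¬ IsMinor (⊤ : SimpleGraph (Fin (q + 2))) H → H.Colorable (q + 1))
    {V A : Type} [Fintype A] (tl hd : A → V) (s : V) (T : Set V)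
    (hsT : s ∉ T) (hacyc : Acyclic tl hd) (hmin : TwoMinimal tl hd s T)
    (hfree : ¬ IsMinor (⊤ : SimpleGraph (Fin (q + 2))) (topology tl hd)) :
    ∃ φ : A → F × F, IsCodingSolution tl hd s T φ := by
  have : Finite (Subtrees tl hd) := Quot.finite _
  let S : Set (Subtrees tl hd) := {C | (ownedNodes C).Nonempty}
  let : Fintype S := Fintype.ofFinite S
  have hS : ¬ IsMinor (⊤ : SimpleGraph (Fin (q + 2))) ((codingGraph tl hd).induce S) :=
    fun h => hfree (h.trans (isMinor_codingGraph_induce hacyc))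
  obtain ⟨κ⟩ := nonempty_coloring_of_induce
    ((hHadwiger S _ hS).toColoring (α := Option F) (by simp [hF]))
    fun C hC => exists_adj_eq_of_not_owned hacyc hC
  exact ⟨_, isCodingSolution_of_coloring hsT hacyc hmin κ⟩

/-- Theorem 4: the Hadwiger Conjecture at `q + 2` implies the
NC-Minor Conjecture for the prime power `q` (realized by the finite field `F` with
`q` elements). -/
theorem NCMinor_of_hadwiger
    (q : ℕ) (F : Type) [Field F] [Fintype F] (hF : Fintype.card F = q)
    (hHadwiger : ∀ (W : Type) [Fintype W] (H : SimpleGraph W),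
      ¬ IsMinor (⊤ : SimpleGraph (Fin (q + 2))) H → H.Colorable (q + 1))
    {V A : Type} [Fintype V] [Fintype A] (tl hd : A → V) (s : V) (T : Set V)
    (hsT : s ∉ T) (hacyc : Acyclic tl hd) (hmin : TwoMinimal tl hd s T)
    (hfree : ¬ IsMinor (⊤ : SimpleGraph (Fin (q + 2))) (topology tl hd)) :
    ∃ φ : A → F × F, IsCodingSolution tl hd s T φ :=
  NCMinor_of_hadwiger_general q F hF hHadwiger tl hd s T hsT hacyc hmin hfree

end NCMinor
end

section
/- Let D = (V, A) be a finite directed multigraph with a designated node s ∈ V such that deleting any single arc strictly decreases λ(v) for some node v ∈ V (D is link-minimal). Then λ(v) = ρ(v) for every node v ≠ s, i.e., the maximum number of arc-disjoint directed paths from s to v equals the in-degree of v. -/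
/-!
If `λ(v) < ρ(v)`, Menger's theorem gives a minimum `v`-cut (a set containing `v` but not `s`
whose entering arcs number `λ(v)`). Minimum cuts are closed under intersection by
submodularity of the cut function, so there is a smallest one, `U`, and some arc `a` into `v`
has its tail in `U`. Deleting `a` lowers no `λ(w)`: if `a` enters a `w`-cut `X`, then `X ∩ U` is a
`v`-cut that is not minimum, and submodularity makes the cut of `X` exceed `λ(w)`. This
contradicts link-minimality.

Menger's theorem is proved by augmenting `0/1`-flows along residual walks, the reachable set of a
stuck residual search being a cut of the flow's value, and by peeling off a walk at a time to
decompose the final flow into arc-disjoint walks.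
-/

theorem Finset.sum_symmDiff {ι M : Type*} [AddCommGroup M] [DecidableEq ι] (F S : Finset ι)
    (f : ι → M) :
    ∑ i ∈ symmDiff F S, f i = ∑ i ∈ F, f i + ∑ i ∈ S, if i ∈ F then -f i else f i := by
  have key (g : ι → M) (T : Finset ι) (hT : T ⊆ F ∪ S) :
      ∑ i ∈ T, g i = ∑ i ∈ F ∪ S, if i ∈ T then g i else 0 := by
    rw [Finset.sum_ite_mem, Finset.inter_eq_right.2 hT]
  rw [key f _ (symmDiff_le_sup ..), key f F subset_union_left, key _ S subset_union_right,
    ← Finset.sum_add_distrib]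
  refine Finset.sum_congr rfl fun i _ => ?_
  by_cases hF : i ∈ F <;> by_cases hS : i ∈ S <;> simp [Finset.mem_symmDiff, hF, hS]

namespace NCMinor

section

open scoped Classical

variable {V A : Type} {tl hd : A → V} {s v : V}

theorem isArcWalk_append_iff : ∀ {p q : List A} {u w : V},
    IsArcWalk tl hd u w (p ++ q) ↔ ∃ m, IsArcWalk tl hd u m p ∧ IsArcWalk tl hd m w q
  | [], _, _, _ => by simp [IsArcWalk]
  | a :: p, q, u, w => by simp [IsArcWalk, isArcWalk_append_iff, and_assoc]

theorem IsArcWalk.exists_nodup_subset : ∀ {p : List A} {u w : V}, IsArcWalk tl hd u w p →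
    ∃ q, IsArcWalk tl hd u w q ∧ q.Nodup ∧ q ⊆ p
  | [], _, _, h => ⟨[], h, List.nodup_nil, List.Subset.refl _⟩
  | a :: p, _, _, ⟨rfl, hp⟩ => by
    obtain ⟨q, hq, hnd, hsub⟩ := hp.exists_nodup_subset
    by_cases haq : a ∈ q
    · obtain ⟨l₁, l₂, rfl⟩ := List.append_of_mem haq
      obtain ⟨m, -, hm⟩ := isArcWalk_append_iff.1 hq
      refine ⟨a :: l₂, ⟨rfl, hm.2⟩, hnd.sublist (List.sublist_append_right _ _), ?_⟩
      exact List.cons_subset_cons _ fun x hx => hsub (by simp [hx])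
    · exact ⟨a :: q, ⟨rfl, hq⟩, List.nodup_cons.2 ⟨haq, hnd⟩, List.cons_subset_cons _ hsub⟩

theorem IsArcWalk.exists_mem_enters {X : Set V} : ∀ {p : List A} {u w : V},
    IsArcWalk tl hd u w p → u ∉ X → w ∈ X → ∃ a ∈ p, tl a ∉ X ∧ hd a ∈ X
  | [], _, _, h, hu, hw => absurd (h ▸ hw) hu
  | a :: p, _, _, ⟨rfl, hp⟩, hu, hw => by
    by_cases ha : hd a ∈ X
    · exact ⟨a, List.mem_cons_self .., hu, ha⟩
    · obtain ⟨b, hb, hbX⟩ := hp.exists_mem_enters ha hw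
      exact ⟨b, List.mem_cons_of_mem _ hb, hbX⟩

theorem exists_walk_or_closed (S : Set A) (u w : V) :
    (∃ p, IsArcWalk tl hd u w p ∧ ∀ a ∈ p, a ∈ S) ∨
      ∃ X : Set V, w ∈ X ∧ u ∉ X ∧ ∀ a ∈ S, tl a ∉ X → hd a ∉ X := by
  by_cases h : ∃ p, IsArcWalk tl hd u w p ∧ ∀ a ∈ p, a ∈ S
  · exact Or.inl h
  refine Or.inr ⟨{x | ¬ ∃ p, IsArcWalk tl hd u x p ∧ ∀ a ∈ p, a ∈ S}, h,
    fun hu => hu ⟨[], rfl, by simp⟩, fun a ha hta hha => hha ?_⟩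
  obtain ⟨p, hp, hpS⟩ := not_not.1 hta
  refine ⟨p ++ [a], isArcWalk_append_iff.2 ⟨_, hp, rfl, rfl⟩, ?_⟩
  simpa [or_imp, forall_and] using ⟨hpS, ha⟩

noncomputable def netEntry (tl hd : A → V) (X : Set V) (a : A) : ℤ :=
  (if hd a ∈ X then 1 else 0) - (if tl a ∈ X then 1 else 0)

theorem IsArcWalk.sum_netEntry (X : Set V) : ∀ {p : List A} {u w : V},
    IsArcWalk tl hd u w p →
      (p.map (netEntry tl hd X)).sum = (if w ∈ X then 1 else 0) - (if u ∈ X then 1 else 0)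
  | [], _, _, h => by cases (h : _ = _); simp
  | a :: p, _, _, ⟨rfl, hp⟩ => by
    rw [List.map_cons, List.sum_cons, hp.sum_netEntry X, netEntry]
    ring

def IsPathPacking (tl hd : A → V) (s v : V) {k : ℕ} (P : Fin k → List A) : Prop :=
  (∀ i, IsArcWalk tl hd s v (P i)) ∧ ∀ i j, i ≠ j → ∀ a, a ∈ P i → a ∉ P j

theorem isPathPacking_elim0 (P : Fin 0 → List A) : IsPathPacking tl hd s v P :=
  ⟨fun i => i.elim0, fun i => i.elim0⟩

theorem IsPathPacking.card_le_cutVal [Finite A] {k : ℕ} {P : Fin k → List A}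
    (hP : IsPathPacking tl hd s v P) {X : Set V} (hv : v ∈ X) (hs : s ∉ X) :
    k ≤ cutVal tl hd X := by
  choose f hfP hfX using fun i => (hP.1 i).exists_mem_enters hs hv
  calc k = (Set.univ : Set (Fin k)).ncard := by simp
    _ ≤ cutVal tl hd X :=
      Set.ncard_le_ncard_of_injOn f (fun i _ => hfX i) fun i _ j _ hij =>
        by_contra fun hne => hP.2 i j hne _ (hfP i) (hij ▸ hfP j)

theorem lam_le_cutVal [Finite A] {X : Set V} (hv : v ∈ X) (hs : s ∉ X) :
    lam tl hd s v ≤ cutVal tl hd X :=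
  csSup_le ⟨0, Fin.elim0, isPathPacking_elim0 _⟩ fun _ ⟨_, hP⟩ =>
    IsPathPacking.card_le_cutVal hP hv hs

theorem IsPathPacking.le_lam [Finite A] {k : ℕ} {P : Fin k → List A}
    (hP : IsPathPacking tl hd s v P) (hvs : v ≠ s) : k ≤ lam tl hd s v :=
  le_csSup ⟨cutVal tl hd {v}, fun _ ⟨_, hQ⟩ =>
    IsPathPacking.card_le_cutVal hQ rfl (Ne.symm hvs)⟩ ⟨P, hP⟩

theorem lam_le_inDeg [Finite A] (hvs : v ≠ s) : lam tl hd s v ≤ inDeg hd v :=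
  (lam_le_cutVal (X := {v}) rfl (Ne.symm hvs)).trans (Set.ncard_le_ncard fun _ ha => ha.2)

theorem lam_self (tl hd : A → V) (s : V) : lam tl hd s s = 0 :=
  Nat.sSup_of_not_bddAbove fun ⟨b, hb⟩ => b.not_succ_le_self
    (hb (show b + 1 ∈ _ from
      ⟨fun _ => [], fun _ => rfl, fun _ _ _ _ h => absurd h List.not_mem_nil⟩))

noncomputable def netFlowInto (tl hd : A → V) (F : Finset A) (X : Set V) : ℤ :=
  ∑ a ∈ F, netEntry tl hd X a

/-- `F`, read as a `0/1`-flow, carries `n` units from `s` to `v`. Testing the net inflow only on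
sets that separate `v` from `s` encodes conservation at all other nodes. -/
def IsFlow (tl hd : A → V) (s v : V) (F : Finset A) (n : ℕ) : Prop :=
  ∀ X : Set V, v ∈ X → s ∉ X → netFlowInto tl hd F X = n

theorem IsArcWalk.isFlow_toFinset {p : List A} (hp : IsArcWalk tl hd s v p) (hnd : p.Nodup) :
    IsFlow tl hd s v p.toFinset 1 := fun X hv hs => by
  simp [netFlowInto, List.sum_toFinset _ hnd, hp.sum_netEntry, hv, hs]

theorem IsFlow.sdiff {F G : Finset A} {n : ℕ} (hF : IsFlow tl hd s v F (n + 1))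
    (hG : IsFlow tl hd s v G 1) (hGF : G ⊆ F) : IsFlow tl hd s v (F \ G) n := fun X hv hs => by
  rw [netFlowInto, Finset.sum_sdiff_eq_sub hGF, ← netFlowInto, ← netFlowInto, hF X hv hs,
    hG X hv hs]
  push_cast
  ring

theorem IsFlow.exists_walk {F : Finset A} {n : ℕ} (hF : IsFlow tl hd s v F (n + 1)) :
    ∃ p, IsArcWalk tl hd s v p ∧ p.Nodup ∧ ∀ a ∈ p, a ∈ F := by
  rcases exists_walk_or_closed (F : Set A) s v with ⟨p, hp, hpF⟩ | ⟨X, hv, hs, hX⟩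
  · obtain ⟨q, hq, hnd, hqp⟩ := hp.exists_nodup_subset
    exact ⟨q, hq, hnd, fun a ha => hpF a (hqp ha)⟩
  · have hle : netFlowInto tl hd F X ≤ 0 := Finset.sum_nonpos fun a ha => by
      by_cases hh : hd a ∈ X
      · have ht : tl a ∈ X := by_contra fun ht => hX a ha ht hh
        simp [netEntry, hh, ht]
      · simp only [netEntry, hh, if_false]
        split_ifs <;> norm_num
    have := hF X hv hs
    omega

theorem IsFlow.exists_pathPacking {n : ℕ} : ∀ {F : Finset A}, IsFlow tl hd s v F n →
    ∃ P : Fin n → List A, IsPathPacking tl hd s v P ∧ ∀ i, ∀ a ∈ P i, a ∈ F := by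
  induction n with
  | zero => exact fun _ => ⟨Fin.elim0, isPathPacking_elim0 _, fun i => i.elim0⟩
  | succ n ih =>
    intro F hF
    obtain ⟨p, hp, hnd, hpF⟩ := hF.exists_walk
    have hsub : p.toFinset ⊆ F := fun a ha => hpF a (List.mem_toFinset.1 ha)
    obtain ⟨P, ⟨hPwalk, hPdisj⟩, hPF⟩ := ih (hF.sdiff (hp.isFlow_toFinset hnd) hsub)
    have hpP : ∀ i, ∀ a ∈ P i, a ∉ p := fun i a ha hap =>
      (Finset.mem_sdiff.1 (hPF i a ha)).2 (List.mem_toFinset.2 hap)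
    refine ⟨Fin.cons p P, ⟨Fin.cases hp hPwalk, ?_⟩, Fin.cases hpF fun i a ha =>
      (Finset.mem_sdiff.1 (hPF i a ha)).1⟩
    intro i j hij a hai haj
    induction i using Fin.cases <;> induction j using Fin.cases
    · exact hij rfl
    · exact hpP _ a haj hai
    · exact hpP _ a hai haj
    · exact hPdisj _ _ (fun h => hij (congrArg _ h)) a hai haj

/-- The residual graph of `F` has arc set `A × Bool`: `(a, true)` runs along `a` and is available
when `a ∉ F`, `(a, false)` runs against `a` and is available when `a ∈ F`. -/
def resTail (tl hd : A → V) (e : A × Bool) : V := if e.2 then tl e.1 else hd e.1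

def resHead (tl hd : A → V) (e : A × Bool) : V := if e.2 then hd e.1 else tl e.1

def residualArcs (F : Finset A) : Set (A × Bool) := {e | e.2 = true ↔ e.1 ∉ F}

theorem netEntry_residual {F : Finset A} {e : A × Bool} (he : e ∈ residualArcs F) (X : Set V) :
    netEntry (resTail tl hd) (resHead tl hd) X e =
      if e.1 ∈ F then -netEntry tl hd X e.1 else netEntry tl hd X e.1 := by
  obtain ⟨a, _ | _⟩ := e <;> simp_all [residualArcs, resTail, resHead, netEntry]

theorem IsFlow.augment {F : Finset A} {n : ℕ} (hF : IsFlow tl hd s v F n) {q : List (A × Bool)}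
    (hq : IsArcWalk (resTail tl hd) (resHead tl hd) s v q) (hnd : q.Nodup)
    (hres : ∀ e ∈ q, e ∈ residualArcs F) :
    IsFlow tl hd s v (symmDiff F (q.map Prod.fst).toFinset) (n + 1) := fun X hv hs => by
  have hfst : (q.map Prod.fst).Nodup := hnd.map_on fun e he e' he' h => by
    have h₁ : e.2 = true ↔ e.1 ∉ F := hres e he
    have h₂ : e'.2 = true ↔ e'.1 ∉ F := hres e' he'
    exact Prod.ext h (Bool.eq_iff_iff.2 (by rw [h₁, h₂, h]))
  rw [netFlowInto, Finset.sum_symmDiff, ← netFlowInto, hF X hv hs, List.sum_toFinset _ hfst,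
    List.map_map, Function.comp_def,
    List.map_congr_left fun e he => (netEntry_residual (hres e he) X).symm, hq.sum_netEntry]
  simp [hv, hs]

theorem netFlowInto_eq_cutVal {F : Finset A} {X : Set V}
    (hin : ∀ a, tl a ∉ X → hd a ∈ X → a ∈ F) (hout : ∀ a ∈ F, tl a ∈ X → hd a ∈ X) :
    netFlowInto tl hd F X = cutVal tl hd X := by
  have hentry : ∀ a ∈ F, netEntry tl hd X a = if tl a ∉ X ∧ hd a ∈ X then 1 else 0 :=
    fun a ha => by
      by_cases ht : tl a ∈ X
      · simp [netEntry, ht, hout a ha ht]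
      · by_cases hh : hd a ∈ X <;> simp [netEntry, ht, hh]
  have hcut : {a | tl a ∉ X ∧ hd a ∈ X} = ↑(F.filter fun a => tl a ∉ X ∧ hd a ∈ X) := by
    ext a
    simpa using fun ht hh => hin a ht hh
  rw [netFlowInto, Finset.sum_congr rfl hentry, Finset.sum_boole, cutVal, hcut,
    Set.ncard_coe_finset]

theorem exists_isFlow {n : ℕ}
    (hcut : ∀ X : Set V, v ∈ X → s ∉ X → n ≤ cutVal tl hd X) : ∃ F, IsFlow tl hd s v F n := by
  induction n with
  | zero => exact ⟨∅, fun X _ _ => by simp [netFlowInto]⟩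
  | succ n ih =>
    obtain ⟨F, hF⟩ := ih fun X hv hs => (hcut X hv hs).trans' n.le_succ
    rcases exists_walk_or_closed (residualArcs F) s v (tl := resTail tl hd) (hd := resHead tl hd)
      with ⟨q, hq, hqres⟩ | ⟨X, hv, hs, hX⟩
    · obtain ⟨q', hq', hnd, hsub⟩ := hq.exists_nodup_subset
      exact ⟨_, hF.augment hq' hnd fun e he => hqres e (hsub he)⟩
    · -- no residual arc enters `X`, so `X` is a cut of value `n`
      have hin : ∀ a, tl a ∉ X → hd a ∈ X → a ∈ F := fun a ht hh =>
        by_contra fun ha => hX (a, true) (by simpa [residualArcs]) ht hh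
      have hout : ∀ a ∈ F, tl a ∈ X → hd a ∈ X := fun a ha ht =>
        by_contra fun hh => hX (a, false) (by simpa [residualArcs]) hh ht
      have := hF X hv hs
      rw [netFlowInto_eq_cutVal hin hout] at this
      have := hcut X hv hs
      omega

theorem le_lam_of_forall_le_cutVal [Finite A] {n : ℕ} (hvs : v ≠ s)
    (hcut : ∀ X : Set V, v ∈ X → s ∉ X → n ≤ cutVal tl hd X) : n ≤ lam tl hd s v := by
  obtain ⟨F, hF⟩ := exists_isFlow hcut
  obtain ⟨P, hP, -⟩ := hF.exists_pathPacking
  exact hP.le_lam hvs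

theorem cutVal_inter_add_cutVal_union_le [Finite A] (tl hd : A → V) (X Y : Set V) :
    cutVal tl hd (X ∩ Y) + cutVal tl hd (X ∪ Y) ≤ cutVal tl hd X + cutVal tl hd Y := by
  let entering (Z : Set V) : Set A := {a | tl a ∉ Z ∧ hd a ∈ Z}
  have h₁ : entering (X ∩ Y) ∪ entering (X ∪ Y) ⊆ entering X ∪ entering Y := by
    intro a
    simp only [entering, Set.mem_union, Set.mem_inter_iff, Set.mem_ofPred_eq]
    tauto
  have h₂ : entering (X ∩ Y) ∩ entering (X ∪ Y) ⊆ entering X ∩ entering Y := by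
    intro a
    simp only [entering, Set.mem_union, Set.mem_inter_iff, Set.mem_ofPred_eq]
    tauto
  calc cutVal tl hd (X ∩ Y) + cutVal tl hd (X ∪ Y)
      = (entering (X ∩ Y) ∪ entering (X ∪ Y)).ncard
          + (entering (X ∩ Y) ∩ entering (X ∪ Y)).ncard :=
        (Set.ncard_union_add_ncard_inter _ _).symm
    _ ≤ (entering X ∪ entering Y).ncard + (entering X ∩ entering Y).ncard :=
        add_le_add (Set.ncard_le_ncard h₁) (Set.ncard_le_ncard h₂)
    _ = cutVal tl hd X + cutVal tl hd Y := Set.ncard_union_add_ncard_inter _ _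

theorem cutVal_delete (tl hd : A → V) (a : A) (X : Set V) :
    cutVal (fun b : {b : A // b ≠ a} => tl b.1) (fun b => hd b.1) X =
      ({b | tl b ∉ X ∧ hd b ∈ X} \ {a}).ncard := by
  rw [cutVal, ← Set.ncard_image_of_injective _ Subtype.val_injective]
  congr 1
  ext b
  simp

def IsTightCut (tl hd : A → V) (s v : V) (U : Set V) : Prop :=
  v ∈ U ∧ s ∉ U ∧ cutVal tl hd U = lam tl hd s v

theorem exists_isTightCut [Finite A] (hvs : v ≠ s) : ∃ U, IsTightCut tl hd s v U := by
  obtain ⟨U, ⟨hv, hs⟩, hmin⟩ := (measure (cutVal tl hd)).wf.has_min {X | v ∈ X ∧ s ∉ X}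
    ⟨{v}, rfl, Ne.symm hvs⟩
  refine ⟨U, hv, hs, le_antisymm ?_ (lam_le_cutVal hv hs)⟩
  exact le_lam_of_forall_le_cutVal hvs fun X hvX hsX => not_lt.1 (hmin X ⟨hvX, hsX⟩)

theorem IsTightCut.inter [Finite A] {X Y : Set V} (hX : IsTightCut tl hd s v X)
    (hY : IsTightCut tl hd s v Y) : IsTightCut tl hd s v (X ∩ Y) := by
  obtain ⟨hvX, hsX, hXt⟩ := hX
  obtain ⟨hvY, hsY, hYt⟩ := hY
  have h₁ := lam_le_cutVal (tl := tl) (hd := hd) (X := X ∩ Y) ⟨hvX, hvY⟩ fun h => hsX h.1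
  have h₂ := lam_le_cutVal (tl := tl) (hd := hd) (X := X ∪ Y) (Or.inl hvX)
    fun h => h.elim hsX hsY
  have := cutVal_inter_add_cutVal_union_le tl hd X Y
  exact ⟨⟨hvX, hvY⟩, fun h => hsX h.1, by omega⟩

theorem subset_of_minimal_isTightCut [Finite A] {U Y : Set V}
    (hU : Minimal (IsTightCut tl hd s v) U) (hY : IsTightCut tl hd s v Y) : U ⊆ Y := by
  rw [← hU.eq_of_subset (hU.prop.inter hY) Set.inter_subset_left]
  exact Set.inter_subset_right

theorem exists_minimal_isTightCut [Finite V] [Finite A] (hvs : v ≠ s) :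
    ∃ U, Minimal (IsTightCut tl hd s v) U :=
  (Set.toFinite {U | IsTightCut tl hd s v U}).exists_minimal (exists_isTightCut hvs)

theorem exists_tail_mem_of_cutVal_lt_inDeg [Finite A] {U : Set V} (hv : v ∈ U)
    (hlt : cutVal tl hd U < inDeg hd v) : ∃ a, hd a = v ∧ tl a ∈ U := by
  by_contra! h
  exact hlt.not_ge (Set.ncard_le_ncard fun a ha => ⟨h a ha, (ha : hd a = v) ▸ hv⟩)

theorem lam_le_lam_delete [Finite A] {U : Set V} (hU : Minimal (IsTightCut tl hd s v) U)
    {a : A} (hav : hd a = v) (haU : tl a ∈ U) {w : V} (hws : w ≠ s) :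
    lam tl hd s w ≤ lam (fun b : {b : A // b ≠ a} => tl b.1) (fun b => hd b.1) s w := by
  obtain ⟨hvU, hsU, hUt⟩ := hU.prop
  refine le_lam_of_forall_le_cutVal hws fun X hwX hsX => ?_
  rw [cutVal_delete]
  by_cases hcross : tl a ∉ X ∧ hd a ∈ X
  · have hvX : v ∈ X := hav ▸ hcross.2
    -- `X ∩ U` is a `v`-cut missing `tl a ∈ U`, so it is not minimum
    have hnt : cutVal tl hd (X ∩ U) ≠ lam tl hd s v := fun h =>
      hcross.1 (subset_of_minimal_isTightCut hU (Y := X ∩ U)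
        ⟨⟨hvX, hvU⟩, fun h' => hsX h'.1, h⟩ haU).1
    have h₁ := lam_le_cutVal (tl := tl) (hd := hd) (X := X ∩ U) ⟨hvX, hvU⟩ fun h => hsX h.1
    have h₂ := lam_le_cutVal (tl := tl) (hd := hd) (X := X ∪ U) (Or.inl hwX)
      fun h => h.elim hsX hsU
    have h₃ := cutVal_inter_add_cutVal_union_le tl hd X U
    have h₄ := Set.pred_ncard_le_ncard_sdiff_singleton {b | tl b ∉ X ∧ hd b ∈ X} a
    unfold cutVal at *
    omega
  · rw [Set.sdiff_singleton_eq_self (s := {b | tl b ∉ X ∧ hd b ∈ X}) hcross]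
    exact lam_le_cutVal hwX hsX

end

/-- Lemma 3: in a link-minimal network, the max-flow from the source
to any non-source node equals its in-degree. -/
theorem lam_eq_inDeg_of_linkMinimal
    {V A : Type} [Fintype V] [Fintype A] (tl hd : A → V) (s : V)
    (hmin : LinkMinimal tl hd s) :
    ∀ v : V, v ≠ s → lam tl hd s v = inDeg hd v := by
  intro v hvs
  refine (lam_le_inDeg hvs).antisymm (not_lt.1 fun hlt => ?_)
  obtain ⟨U, hU⟩ := exists_minimal_isTightCut (tl := tl) (hd := hd) hvs
  obtain ⟨a, hav, haU⟩ := exists_tail_mem_of_cutVal_lt_inDeg hU.prop.1 (hU.prop.2.2 ▸ hlt)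
  obtain ⟨w, hw⟩ := hmin a
  rcases eq_or_ne w s with rfl | hws
  · simp [lam_self] at hw
  · exact (lam_le_lam_delete hU hav haU hws).not_gt hw

end NCMinor
end
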